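/- (Extension through an 8-cycle gadget) Let C = [x y z u₁ u₂ u₃ u₄ u₅] be an 8-cycle with chord xz in a graph G, where z has exactly one neighbor z' outside C ∪ {chord} and y has exactly one neighbor y' outside, each uᵢ has exactly one neighbor outside C, and x has no neighbor outside. Then any proper 3-coloring of G − V(C) extends to a proper 3-coloring of G. -/

import Mathlib

/-!
If the outside neighbours `y'` and `z'` get the same colour, give `x` that colour and colour
`u₅, …, u₁, z, y` greedily: each vertex meets at most two colours when its turn comes, since
`z'` and `y'` repeat the colour of `x`. Otherwise give `z` the colour of `y'`, which differs
from that of `z'`, and colour `u₁, …, u₅, x, y` greedily; `y` then meets only the colours of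
`x` and `z`.
-/

lemma exists_eight_cycle_gadget_colors {α : Type*} (hα : 3 ≤ ENat.card α)
    (py pz q1 q2 q3 q4 q5 : α) :
    ∃ cx cy cz c1 c2 c3 c4 c5 : α,
      cx ≠ cy ∧ cx ≠ cz ∧ cx ≠ c5 ∧ cy ≠ cz ∧ cy ≠ py ∧ cz ≠ c1 ∧ cz ≠ pz ∧
      c1 ≠ c2 ∧ c1 ≠ q1 ∧ c2 ≠ c3 ∧ c2 ≠ q2 ∧ c3 ≠ c4 ∧ c3 ≠ q3 ∧
      c4 ≠ c5 ∧ c4 ≠ q4 ∧ c5 ≠ q5 := by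
  have pick := ENat.exists_ne_ne_of_three_le hα
  by_cases hp : pz = py
  · obtain ⟨c5, _, _⟩ := pick py q5
    obtain ⟨c4, _, _⟩ := pick c5 q4
    obtain ⟨c3, _, _⟩ := pick c4 q3
    obtain ⟨c2, _, _⟩ := pick c3 q2
    obtain ⟨c1, _, _⟩ := pick c2 q1
    obtain ⟨cz, _, _⟩ := pick c1 py
    obtain ⟨cy, _, _⟩ := pick cz py
    exact ⟨py, cy, cz, c1, c2, c3, c4, c5, by grind⟩
  · obtain ⟨c1, _, _⟩ := pick py q1
    obtain ⟨c2, _, _⟩ := pick c1 q2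
    obtain ⟨c3, _, _⟩ := pick c2 q3
    obtain ⟨c4, _, _⟩ := pick c3 q4
    obtain ⟨c5, _, _⟩ := pick c4 q5
    obtain ⟨cx, _, _⟩ := pick c5 py
    obtain ⟨cy, _, _⟩ := pick cx py
    exact ⟨cx, cy, py, c1, c2, c3, c4, c5, by grind⟩

namespace SimpleGraph

variable {V α : Type*} {G : SimpleGraph V}

lemma adj_ne_of_neighborSet_eq {f : V → α} {a : V} {s : Set V} (ha : G.neighborSet a = s)
    (hs : ∀ b ∈ s, f a ≠ f b) : ∀ b, G.Adj a b → f a ≠ f b :=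
  fun b hab => hs b (ha ▸ hab)

lemma adj_ne_of_forall_mem_adj_ne {S : Set V} {c c' : V → α}
    (hc : ∀ a b, G.Adj a b → a ∉ S → b ∉ S → c a ≠ c b) (hagree : ∀ a ∉ S, c' a = c a)
    (hS : ∀ a ∈ S, ∀ b, G.Adj a b → c' a ≠ c' b) (a b : V) (hab : G.Adj a b) : c' a ≠ c' b := by
  by_cases ha : a ∈ S
  · exact hS a ha b hab
  by_cases hb : b ∈ S
  · exact (hS b hb a hab.symm).symm
  rw [hagree a ha, hagree b hb]
  exact hc a b hab ha hb

end SimpleGraph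

open SimpleGraph

/-- Extension through an 8-cycle gadget.  Let `[x y z u₁ u₂ u₃ u₄ u₅]` be an 8-cycle with
chord `xz` in a graph `G`, where `z` is a 4-vertex with unique outside neighbor `z'`, `y`
is a 3-vertex with unique outside neighbor `y'`, `x` is a 3-vertex with no outside
neighbor, and each `uᵢ` is a 3-vertex with unique outside neighbor `wᵢ`.  Then any proper
3-coloring of `G` minus the cycle vertices extends to a proper 3-coloring of `G`. -/
theorem eight_cycle_gadget_extends {V : Type*} (G : SimpleGraph V)
    (x y z y' z' u1 u2 u3 u4 u5 w1 w2 w3 w4 w5 : V)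
    (hnodup : ([x, y, z, u1, u2, u3, u4, u5] : List V).Nodup)
    (hx : G.neighborSet x = {y, z, u5})
    (hy : G.neighborSet y = {x, z, y'})
    (hz : G.neighborSet z = {x, y, u1, z'})
    (hu1 : G.neighborSet u1 = {z, u2, w1})
    (hu2 : G.neighborSet u2 = {u1, u3, w2})
    (hu3 : G.neighborSet u3 = {u2, u4, w3})
    (hu4 : G.neighborSet u4 = {u3, u5, w4})
    (hu5 : G.neighborSet u5 = {u4, x, w5})
    (houtside : ∀ t ∈ ({y', z', w1, w2, w3, w4, w5} : Set V),
      t ∉ ({x, y, z, u1, u2, u3, u4, u5} : Set V))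
    (c : V → Fin 3)
    (hc : ∀ a b, G.Adj a b → a ∉ ({x, y, z, u1, u2, u3, u4, u5} : Set V) →
      b ∉ ({x, y, z, u1, u2, u3, u4, u5} : Set V) → c a ≠ c b) :
    ∃ c' : V → Fin 3, (∀ a b, G.Adj a b → c' a ≠ c' b) ∧
      ∀ a, a ∉ ({x, y, z, u1, u2, u3, u4, u5} : Set V) → c' a = c a := by
  classical
  obtain ⟨cx, cy, cz, c1, c2, c3, c4, c5, hcol⟩ := exists_eight_cycle_gadget_colors (by simp)
    (c y') (c z') (c w1) (c w2) (c w3) (c w4) (c w5)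
  set S : Set V := {x, y, z, u1, u2, u3, u4, u5}
  let c' : V → Fin 3 := fun v =>
    if v = x then cx else if v = y then cy else if v = z then cz else
    if v = u1 then c1 else if v = u2 then c2 else if v = u3 then c3 else
    if v = u4 then c4 else if v = u5 then c5 else c v
  have hagree : ∀ a ∉ S, c' a = c a := by
    intro a ha
    simp only [S, Set.mem_insert_iff, Set.mem_singleton_iff, not_or] at ha
    simp [c', ha]
  have hout : c' y' = c y' ∧ c' z' = c z' ∧ c' w1 = c w1 ∧ c' w2 = c w2 ∧ c' w3 = c w3 ∧
      c' w4 = c w4 ∧ c' w5 = c w5 := by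
    simp only [Set.mem_insert_iff, Set.mem_singleton_iff, forall_eq_or_imp, forall_eq] at houtside
    grind
  have hin : c' x = cx ∧ c' y = cy ∧ c' z = cz ∧ c' u1 = c1 ∧ c' u2 = c2 ∧ c' u3 = c3 ∧
      c' u4 = c4 ∧ c' u5 = c5 := by
    simp only [List.nodup_cons, List.mem_cons, List.not_mem_nil] at hnodup
    grind
  refine ⟨c', adj_ne_of_forall_mem_adj_ne hc hagree ?_, hagree⟩
  simp only [S, Set.mem_insert_iff, Set.mem_singleton_iff, forall_eq_or_imp, forall_eq]
  refine ⟨adj_ne_of_neighborSet_eq hx ?_, adj_ne_of_neighborSet_eq hy ?_,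
    adj_ne_of_neighborSet_eq hz ?_, adj_ne_of_neighborSet_eq hu1 ?_,
    adj_ne_of_neighborSet_eq hu2 ?_, adj_ne_of_neighborSet_eq hu3 ?_,
    adj_ne_of_neighborSet_eq hu4 ?_, adj_ne_of_neighborSet_eq hu5 ?_⟩ <;>
  simp only [Set.mem_insert_iff, Set.mem_singleton_iff, forall_eq_or_imp, forall_eq, hin, hout] <;> grind
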